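/- (Corollary 2.6) For every integer n ≥ 0, λ ∈ ℝ, and x ∈ ℝ, the degenerate central complete Bell polynomial with all arguments equal to x satisfies B_n^{(c)}(x, x, …, x|λ) = B^{(c)}_{n,λ}(x), where B^{(c)}_{n,λ}(x) is the degenerate central Bell polynomial. -/

import Mathlib

open PowerSeries Finset Nat

/-- The degenerate falling factorial `(x)_{n,λ} = x(x-λ)⋯(x-(n-1)λ)`. -/
noncomputable def dFall (l x : ℝ) (n : ℕ) : ℝ := ∏ i ∈ Finset.range n, (x - i * l)

/-- The degenerate rising factorial `⟨x⟩_{n,λ} = x(x+λ)⋯(x+(n-1)λ)`. -/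
noncomputable def dRise (l x : ℝ) (n : ℕ) : ℝ := ∏ i ∈ Finset.range n, (x + i * l)

/-- The degenerate exponential formal power series `e_λ^x(t) = ∑_{n≥0} (x)_{n,λ} tⁿ/n!`. -/
noncomputable def degExp (l x : ℝ) : PowerSeries ℝ :=
  PowerSeries.mk fun n => dFall l x n / (n ! : ℝ)

/-- Exponential of a formal power series `G` (with zero constant term):
`coeff n (exp G) = ∑_{k=0}^{n} (1/k!) coeff n (G^k)`. -/
noncomputable def expComp (G : PowerSeries ℝ) : PowerSeries ℝ :=
  PowerSeries.mk fun n =>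
    ∑ k ∈ Finset.range (n + 1), (k ! : ℝ)⁻¹ * PowerSeries.coeff n (G ^ k)

/-- The series `∑_{m≥1} x_m (1)_{m,λ} t^m/m!`. -/
noncomputable def degBellSeries (l : ℝ) (x : ℕ → ℝ) : PowerSeries ℝ :=
  PowerSeries.mk fun m => if m = 0 then 0 else x m * dFall l 1 m / (m ! : ℝ)

/-- The degenerate incomplete Bell polynomial `B_{n,k}(x₁,…,x_{n-k+1}|λ)`, defined by
`(1/k!)(∑_{m≥1} x_m (1)_{m,λ} t^m/m!)^k = ∑_{n≥k} B_{n,k}(x₁,…|λ) tⁿ/n!`. -/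
noncomputable def degIncBell (l : ℝ) (x : ℕ → ℝ) (n k : ℕ) : ℝ :=
  (n ! : ℝ) * PowerSeries.coeff n ((k ! : ℝ)⁻¹ • (degBellSeries l x) ^ k)

/-- The degenerate complete Bell polynomial `B_n(x₁,…,x_n|λ)`, defined by
`exp(∑_{i≥1} x_i (1)_{i,λ} t^i/i!) = ∑_{n≥0} B_n(x₁,…,x_n|λ) tⁿ/n!`. -/
noncomputable def degCompBell (l : ℝ) (x : ℕ → ℝ) (n : ℕ) : ℝ :=
  (n ! : ℝ) * PowerSeries.coeff n (expComp (degBellSeries l x))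

/-- The degenerate Stirling numbers of the second kind `S_{2,λ}(n,k)`, defined by
`(1/k!)(e_λ(t)-1)^k = ∑_{n≥k} S_{2,λ}(n,k) tⁿ/n!`. -/
noncomputable def degStirling2 (l : ℝ) (n k : ℕ) : ℝ :=
  (n ! : ℝ) * PowerSeries.coeff n ((k ! : ℝ)⁻¹ • (degExp l 1 - 1) ^ k)

/-- The degenerate Bell polynomials `B_{n,λ}(x)`, defined by
`exp(x(e_λ(t)-1)) = ∑_{n≥0} B_{n,λ}(x) tⁿ/n!`. -/
noncomputable def degBell (l x : ℝ) (n : ℕ) : ℝ :=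
  (n ! : ℝ) * PowerSeries.coeff n (expComp (x • (degExp l 1 - 1)))

/-- The formal power series `log(1+t) = ∑_{n≥1} (-1)^{n+1} tⁿ/n`. -/
noncomputable def logOnePlus : PowerSeries ℝ :=
  PowerSeries.mk fun n => if n = 0 then 0 else (-1) ^ (n + 1) / (n : ℝ)

/-- The (signed) Stirling numbers of the first kind `S₁(n,k)`, defined by
`(1/k!)(log(1+t))^k = ∑_{n≥k} S₁(n,k) tⁿ/n!`. -/
noncomputable def stirling1 (n k : ℕ) : ℝ :=
  (n ! : ℝ) * PowerSeries.coeff n ((k ! : ℝ)⁻¹ • logOnePlus ^ k)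

/-- The series `∑_{m≥1} x_m ((1/2)_{m,λ} - (-1)^m ⟨1/2⟩_{m,λ}) t^m/m!`. -/
noncomputable def centralSeq (l : ℝ) (x : ℕ → ℝ) : PowerSeries ℝ :=
  PowerSeries.mk fun m => if m = 0 then 0 else
    x m * (dFall l (1 / 2) m - (-1) ^ m * dRise l (1 / 2) m) / (m ! : ℝ)

/-- The degenerate central incomplete Bell polynomial `T_{n,k}(x₁,…,x_{n-k+1}|λ)`. -/
noncomputable def degCentIncBell (l : ℝ) (x : ℕ → ℝ) (n k : ℕ) : ℝ :=
  (n ! : ℝ) * PowerSeries.coeff n ((k ! : ℝ)⁻¹ • (centralSeq l x) ^ k)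

/-- The degenerate central factorial numbers of the second kind `T_{2,λ}(n,k)`, defined by
`(1/k!)(e_λ^{1/2}(t) - e_λ^{-1/2}(t))^k = ∑_{n≥k} T_{2,λ}(n,k) tⁿ/n!`. -/
noncomputable def degCentFact2 (l : ℝ) (n k : ℕ) : ℝ :=
  (n ! : ℝ) * PowerSeries.coeff n
    ((k ! : ℝ)⁻¹ • (degExp l (1 / 2) - degExp l (-(1 / 2))) ^ k)

/-- The degenerate central Bell polynomial `B^{(c)}_{n,λ}(x)`, defined by
`exp(x(e_λ^{1/2}(t)-e_λ^{-1/2}(t))) = ∑_{n≥0} B^{(c)}_{n,λ}(x) tⁿ/n!`. -/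
noncomputable def degCentBellPoly (l x : ℝ) (n : ℕ) : ℝ :=
  (n ! : ℝ) * PowerSeries.coeff n
    (expComp (x • (degExp l (1 / 2) - degExp l (-(1 / 2)))))

/-- The degenerate central complete Bell polynomial `B_n^{(c)}(x₁,…,x_n|λ)`. -/
noncomputable def degCentCompBell (l : ℝ) (x : ℕ → ℝ) (n : ℕ) : ℝ :=
  (n ! : ℝ) * PowerSeries.coeff n (expComp (centralSeq l x))

/-- The ordinary incomplete Bell polynomials `B_{n,k}(x₁,…,x_{n-k+1})`, defined by
`(1/k!)(∑_{m≥1} x_m t^m/m!)^k = ∑_{n≥k} B_{n,k}(x₁,…) tⁿ/n!`. -/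
noncomputable def incBell (x : ℕ → ℝ) (n k : ℕ) : ℝ :=
  (n ! : ℝ) * PowerSeries.coeff n
    ((k ! : ℝ)⁻¹ • (PowerSeries.mk fun m => if m = 0 then 0 else x m / (m ! : ℝ)) ^ k)

/-- The set of tuples `(i₁,…,i_{n-k+1})` of nonnegative integers with
`i₁+⋯+i_{n-k+1} = k` and `i₁+2i₂+⋯+(n-k+1)i_{n-k+1} = n`
(each such `i_j` is at most `n`, so no solution is cut off). -/
noncomputable def partIdx (n k : ℕ) : Finset (Fin (n - k + 1) → ℕ) :=
  (Fintype.piFinset fun _ => Finset.range (n + 1)).filter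
    fun i => (∑ j, i j) = k ∧ (∑ j, (j.1 + 1) * i j) = n

/-- The set of tuples `(m₁,…,m_n)` of nonnegative integers with `m₁+2m₂+⋯+nm_n = n`. -/
noncomputable def partIdx' (n : ℕ) : Finset (Fin n → ℕ) :=
  (Fintype.piFinset fun _ => Finset.range (n + 1)).filter
    fun m => (∑ j, (j.1 + 1) * m j) = n

theorem dFall_neg (l x : ℝ) (n : ℕ) : dFall l (-x) n = (-1) ^ n * dRise l x n := by
  have factor : ∀ i ∈ range n, -x - i * l = -1 * (x + i * l) := fun _ _ => by ring
  rw [dFall, prod_congr rfl factor, prod_mul_distrib, prod_const, card_range, dRise]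

theorem centralSeq_const (l x : ℝ) :
    centralSeq l (fun _ => x) = x • (degExp l (1 / 2) - degExp l (-(1 / 2))) := by
  ext m
  rcases m with _ | m
  · simp [centralSeq, degExp, dFall]
  · simp only [centralSeq, degExp, coeff_mk, coeff_smul, map_sub, smul_eq_mul, dFall_neg,
      if_neg m.succ_ne_zero]
    ring

/-- Corollary 2.6: `B_n^{(c)}(x,…,x|λ) = B^{(c)}_{n,λ}(x)`. -/
theorem degCentCompBell_const (l x : ℝ) (n : ℕ) :
    degCentCompBell l (fun _ => x) n = degCentBellPoly l x n := by
  rw [degCentCompBell, degCentBellPoly, centralSeq_const]
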